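/- arXiv:1412.1668 — 3 statements merged into one kernel-verified Lean document; each statement's English description precedes it below -/
import Mathlib

section
/- Let d ≥ 1 and let x ∈ ℝ^d be Diophantine. Then there exists a constant C > 0 (depending only on x and d) such that for all n ∈ ℕ, all ℓ ∈ {0,1,…,n} and all m ∈ {0,1,…,n}^d, log|β(ℓ,m)| ≥ n^{d+1} log n / (d+1)! − C·n^{d+1}. -/
open Real MeasureTheory
open scoped ENNReal

/-- Distance from `t` to the nearest integer, `⟨t⟩`. -/
noncomputable def distNearestInt (t : ℝ) : ℝ := |t - round t|

/-- Maximum norm of an integer vector. -/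
noncomputable def qnorm {d : ℕ} (q : Fin d → ℤ) : ℝ :=
  ((Finset.univ.sup fun i => (q i).natAbs : ℕ) : ℝ)

/-- Closed unit polydisk in `ℂ^(d+1)`. -/
def polydisk (d : ℕ) : Set (Fin (d + 1) → ℂ) := {z | ∀ i, ‖z i‖ ≤ 1}

/-- The exponential curve `K(x) = {(e^z, e^{x₁ z}, …, e^{x_d z}) : |z| ≤ 1}` in `ℂ^(d+1)`. -/
def Kset {d : ℕ} (x : Fin d → ℝ) : Set (Fin (d + 1) → ℂ) :=
  {w | ∃ z : ℂ, ‖z‖ ≤ 1 ∧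
    w = Fin.cons (Complex.exp z) fun i => Complex.exp ((x i : ℂ) * z)}

/-- Sup norm `‖P‖_D` of a polynomial over a set `D ⊆ ℂ^(d+1)`. -/
noncomputable def polyNorm {d : ℕ} (P : MvPolynomial (Fin (d + 1)) ℂ)
    (D : Set (Fin (d + 1) → ℂ)) : ℝ :=
  sSup ((fun z => ‖MvPolynomial.eval z P‖) '' D)

/-- `E_n(x) = sup{‖P‖_{Δ^{d+1}} : P ∈ 𝒫_n(d+1), ‖P‖_{K(x)} ≤ 1}`. -/
noncomputable def Efun {d : ℕ} (x : Fin d → ℝ) (n : ℕ) : ℝ :=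
  sSup {r : ℝ | ∃ P : MvPolynomial (Fin (d + 1)) ℂ, P.totalDegree ≤ n ∧
    polyNorm P (Kset x) ≤ 1 ∧ r = polyNorm P (polydisk d)}

/-- `e_n(x) = log E_n(x)`. -/
noncomputable def efun {d : ℕ} (x : Fin d → ℝ) (n : ℕ) : ℝ := Real.log (Efun x n)

/-- `{1, x₁, …, x_d}` is linearly independent over `ℤ`. -/
def LinIndepOne {d : ℕ} (x : Fin d → ℝ) : Prop :=
  ∀ (p : ℤ) (q : Fin d → ℤ), (p : ℝ) + ∑ i, (q i : ℝ) * x i = 0 → p = 0 ∧ q = 0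

/-- `x ∈ ℝ^d` is Diophantine: `⟨q·x⟩ > ε ‖q‖^{-μ}` for all nonzero integer vectors `q`. -/
def IsDiophantine {d : ℕ} (x : Fin d → ℝ) : Prop :=
  ∃ μ : ℝ, (d : ℝ) ≤ μ ∧ ∃ ε : ℝ, 0 < ε ∧ ∀ q : Fin d → ℤ, q ≠ 0 →
    ε * qnorm q ^ (-μ) < distNearestInt (∑ i, (q i : ℝ) * x i)

/-- Membership in the exceptional set `W(d)`: `x ∈ [-1,1]^d` and the limsup over nonzero
nonnegative integer vectors `q` of `(-log⟨q·x⟩)/(‖q‖^{d+1} log‖q‖)` is `∞`. -/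
def memW {d : ℕ} (x : Fin d → ℝ) : Prop :=
  (∀ i, x i ∈ Set.Icc (-1 : ℝ) 1) ∧
  ∀ M N : ℝ, ∃ q : Fin d → ℤ, q ≠ 0 ∧ (∀ i, 0 ≤ q i) ∧ N ≤ qnorm q ∧
    M < (-Real.log (distNearestInt (∑ i, (q i : ℝ) * x i))) /
        (qnorm q ^ (d + 1) * Real.log (qnorm q))

/-- Liouville vectors: coordinates linearly independent over `ℚ`, and not Diophantine. -/
def IsLiouvilleVec {d : ℕ} (x : Fin d → ℝ) : Prop :=
  LinearIndependent ℚ x ∧ ¬ IsDiophantine x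

/-- `β(ℓ,m) = ∏_{j₀+|j| ≤ n, (j₀,j) ≠ (ℓ,m)} ((ℓ - j₀) + (m - j)·x)`. -/
noncomputable def betaProd {d : ℕ} (x : Fin d → ℝ) (n : ℕ) (ℓ : ℕ) (m : Fin d → ℕ) : ℝ :=
  ∏ p ∈ (Finset.range (n + 1) ×ˢ Fintype.piFinset fun _ : Fin d => Finset.range (n + 1)).filter
      (fun p => p.1 + ∑ i, p.2 i ≤ n ∧ p ≠ (ℓ, m)),
    (((ℓ : ℝ) - p.1) + ∑ i, ((m i : ℝ) - p.2 i) * x i)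

/-!
Group the factors of `β(ℓ,m)` by `j`: for fixed `j` they are `t - j₀` with
`t = ℓ + (m - j)·x` and `j₀ = 0, …, L = n - |j|` (without `j₀ = ℓ` when `j = m`).
For `j₀ ≠ round t` one has `|t - j₀| ≥ |round t - j₀| / 2`, and these integers have product
at least `L! / 2^L`; the single factor with `j₀ = round t` is at least `⟨(m - j)·x⟩ ≥ ε n^{-μ}`
by the Diophantine condition, which costs only `O(n)` in the logarithm. Summing over `j`,
`log L! ≥ L log n - n` and `∑_j (n - |j|) ≥ n^{d+1}/(d+1)!` give the bound.
-/

open Finset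
open scoped Nat

theorem Nat.factorial_le_two_pow_mul_prod_max_one_natAbs_sub (L : ℕ) (c : ℤ) :
    L ! ≤ 2 ^ L * ∏ i ∈ range (L + 1), max 1 (c - i).natAbs := by
  induction L generalizing c with
  | zero => simp
  | succ L ih =>
    -- peel off an end factor that is at least `(L + 1) / 2`: `|c| + |c - (L + 1)| ≥ L + 1`
    rcases le_total (c - (L + 1 : ℕ)).natAbs c.natAbs with h | h
    · have hshift : ∏ i ∈ range (L + 1), max 1 (c - ((i + 1 : ℕ) : ℤ)).natAbs =
          ∏ i ∈ range (L + 1), max 1 (c - 1 - i).natAbs :=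
        prod_congr rfl fun i _ => by push_cast; ring_nf
      rw [prod_range_succ', hshift, Nat.factorial_succ]
      have hhalf : L + 1 ≤ 2 * max 1 (c - (0 : ℕ)).natAbs := by omega
      calc (L + 1) * L ! ≤ 2 * max 1 (c - (0 : ℕ)).natAbs *
            (2 ^ L * ∏ i ∈ range (L + 1), max 1 (c - 1 - i).natAbs) :=
          Nat.mul_le_mul hhalf (ih (c - 1))
        _ = _ := by ring
    · rw [prod_range_succ, Nat.factorial_succ]
      have hhalf : L + 1 ≤ 2 * max 1 (c - (L + 1 : ℕ)).natAbs := by omega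
      calc (L + 1) * L ! ≤ 2 * max 1 (c - (L + 1 : ℕ)).natAbs *
            (2 ^ L * ∏ i ∈ range (L + 1), max 1 (c - i).natAbs) :=
          Nat.mul_le_mul hhalf (ih c)
        _ = _ := by ring

theorem pow_succ_div_le_sum_range_pow (p n : ℕ) :
    (n : ℝ) ^ (p + 1) / (p + 1) ≤ ∑ t ∈ range (n + 1), (t : ℝ) ^ p := by
  have hmono : MonotoneOn (fun x : ℝ => x ^ p) (Set.Icc 0 (0 + n)) :=
    fun a ha b _ hab => pow_le_pow_left₀ ha.1 hab p
  have := hmono.integral_le_sum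
  simp only [zero_add, integral_pow] at this
  rw [sum_range_succ']
  push_cast at this
  simpa using this.trans (le_add_of_nonneg_right (by positivity))

theorem sum_piFinset_fin_succ {M : Type*} [AddCommMonoid M] (d : ℕ) (S : Finset ℕ) (f : ℕ → M) :
    ∑ j ∈ Fintype.piFinset (fun _ : Fin (d + 1) => S), f (∑ i, j i) =
      ∑ k ∈ S, ∑ j ∈ Fintype.piFinset (fun _ : Fin d => S), f (k + ∑ i, j i) := by
  have := filter_piFinset_eq_map_consEquiv (fun _ : Fin (d + 1) => S) (fun _ => True)
  simp only [filter_true] at this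
  rw [this, sum_map, sum_product]
  simp only [Fin.consEquiv, Equiv.coe_toEmbedding, Equiv.coe_fn_mk, Fin.sum_univ_succ,
    Fin.cons_zero, Fin.cons_succ]
  rfl

theorem pow_succ_div_factorial_le_sum_sub_sum (d : ℕ) {N n : ℕ} (hn : n ≤ N) :
    (n : ℝ) ^ (d + 1) / (d + 1)! ≤
      ∑ j ∈ Fintype.piFinset (fun _ : Fin d => range (N + 1)), ((n - ∑ i, j i : ℕ) : ℝ) := by
  induction d generalizing n with
  | zero => simp
  | succ d ih =>
    have hreflect : ∑ k ∈ range (n + 1), ((n - k : ℕ) : ℝ) ^ (d + 1) =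
        ∑ t ∈ range (n + 1), (t : ℝ) ^ (d + 1) := by
      simpa using sum_range_reflect (fun t => (t : ℝ) ^ (d + 1)) (n + 1)
    rw [sum_piFinset_fin_succ d _ fun s => ((n - s : ℕ) : ℝ)]
    calc (n : ℝ) ^ (d + 1 + 1) / (d + 1 + 1)!
        = (n : ℝ) ^ (d + 1 + 1) / (d + 1 + 1) / (d + 1)! := by
          rw [Nat.factorial_succ (d + 1), div_div]; push_cast; ring
      _ ≤ ∑ k ∈ range (n + 1), ((n - k : ℕ) : ℝ) ^ (d + 1) / (d + 1)! := by
          rw [← sum_div, hreflect]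
          gcongr
          exact_mod_cast pow_succ_div_le_sum_range_pow (d + 1) n
      _ ≤ ∑ k ∈ range (n + 1), ∑ j ∈ Fintype.piFinset (fun _ : Fin d => range (N + 1)),
            ((n - (k + ∑ i, j i) : ℕ) : ℝ) :=
          sum_le_sum fun k hk => by
            simpa only [Nat.sub_sub] using ih (n := n - k) (by omega)
      _ ≤ _ :=
          sum_le_sum_of_subset_of_nonneg (range_subset_range.2 (by omega))
            fun _ _ _ => sum_nonneg fun _ _ => Nat.cast_nonneg _

theorem factorial_le_two_pow_mul_prod_abs_sub (t : ℝ) (L : ℕ) :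
    (L ! : ℝ) ≤ 2 ^ (2 * L + 1) *
      ∏ i ∈ (range (L + 1)).filter (fun i : ℕ => (i : ℤ) ≠ round t), |t - i| := by
  set c := round t
  have hterm : ∀ i ∈ range (L + 1),
      ((max 1 (c - i).natAbs : ℕ) : ℝ) ≤ 2 * (if (i : ℤ) ≠ c then |t - i| else 1) := by
    intro i _
    split_ifs with h
    · have h1 : (1 : ℝ) ≤ |((c - i : ℤ) : ℝ)| := by
        exact_mod_cast Int.one_le_abs (sub_ne_zero.2 (Ne.symm h))
      have h2 : |((c - i : ℤ) : ℝ)| ≤ |t - c| + |t - i| := by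
        push_cast; exact (abs_sub_le _ t _).trans_eq (by rw [abs_sub_comm])
      rw [Nat.cast_max, Nat.cast_one, Nat.cast_natAbs, Int.cast_abs, max_eq_right h1]
      linarith [abs_sub_round t]
    · simp [not_not.1 h]
  calc (L ! : ℝ) ≤ 2 ^ L * ∏ i ∈ range (L + 1), ((max 1 (c - i).natAbs : ℕ) : ℝ) := by
        exact_mod_cast Nat.factorial_le_two_pow_mul_prod_max_one_natAbs_sub L c
    _ ≤ 2 ^ L * ∏ i ∈ range (L + 1), 2 * (if (i : ℤ) ≠ c then |t - i| else 1) := by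
        gcongr with i hi
        exact hterm i hi
    _ = _ := by
        rw [prod_mul_distrib, prod_const, card_range, ← prod_filter]
        ring

theorem mul_factorial_le_two_pow_mul_prod_abs_sub {t δ : ℝ} (hδ : δ ≤ 1) {L : ℕ}
    {S : Finset ℕ} (hSL : S ⊆ range (L + 1))
    (hS : ∀ i ∈ range (L + 1), (i : ℤ) ≠ round t → i ∈ S) (hδS : ∀ i ∈ S, δ ≤ |t - i|) :
    δ * L ! ≤ 2 ^ (2 * L + 1) * ∏ i ∈ S, |t - i| := by
  rw [← prod_filter_mul_prod_filter_not S (fun i : ℕ => (i : ℤ) ≠ round t)]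
  have hfar : S.filter (fun i : ℕ => (i : ℤ) ≠ round t) =
      (range (L + 1)).filter (fun i : ℕ => (i : ℤ) ≠ round t) := by
    ext i
    simp only [mem_filter]
    exact ⟨fun h => ⟨hSL h.1, h.2⟩, fun h => ⟨hS i h.1 h.2, h.2⟩⟩
  have hnear : δ ≤ ∏ i ∈ S.filter (fun i : ℕ => ¬(i : ℤ) ≠ round t), |t - i| := by
    have hsub : S.filter (fun i : ℕ => ¬(i : ℤ) ≠ round t) ⊆ {(round t).toNat} := by
      intro i hi
      rw [mem_filter, not_not] at hi
      rw [mem_singleton]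
      omega
    rcases subset_singleton_iff.1 hsub with h | h
    · rw [h, prod_empty]; exact hδ
    · have hmem := h ▸ mem_singleton_self (round t).toNat
      rw [h, prod_singleton]
      exact hδS _ (mem_filter.1 hmem).1
  calc δ * L ! ≤ (∏ i ∈ S.filter (fun i : ℕ => ¬(i : ℤ) ≠ round t), |t - i|) *
        (2 ^ (2 * L + 1) * ∏ i ∈ S.filter (fun i : ℕ => (i : ℤ) ≠ round t), |t - i|) :=
      mul_le_mul hnear (hfar ▸ factorial_le_two_pow_mul_prod_abs_sub t L) (by positivity)
        (prod_nonneg fun _ _ => abs_nonneg _)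
    _ = _ := by ring

theorem mul_log_sub_le_log_factorial (L : ℕ) {y : ℝ} (hy : 0 < y) :
    L * Real.log y - y ≤ Real.log L ! := by
  have h := Real.log_le_log (by positivity) (Real.pow_div_factorial_le_exp y hy.le L)
  rw [Real.log_exp, Real.log_div (by positivity) (by positivity), Real.log_pow] at h
  linarith

theorem one_le_qnorm {d : ℕ} {q : Fin d → ℤ} (hq : q ≠ 0) : 1 ≤ qnorm q := by
  obtain ⟨i, hi⟩ := Function.ne_iff.1 hq
  unfold qnorm
  exact_mod_cast (Int.natAbs_pos.2 hi).trans_le (le_sup (f := fun i => (q i).natAbs) (mem_univ i))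

theorem qnorm_le {d n : ℕ} {q : Fin d → ℤ} (hq : ∀ i, (q i).natAbs ≤ n) : qnorm q ≤ n := by
  unfold qnorm
  exact_mod_cast Finset.sup_le fun i _ => hq i

theorem IsDiophantine.exists_separation {d : ℕ} {x : Fin d → ℝ} (hx : IsDiophantine x) :
    ∃ A : ℝ, 0 ≤ A ∧ ∀ n : ℕ, 1 ≤ n → ∃ δ : ℝ, 0 < δ ∧ δ ≤ 1 ∧ -(A * n) ≤ Real.log δ ∧
      ∀ q : Fin d → ℤ, q ≠ 0 → (∀ i, (q i).natAbs ≤ n) →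
        δ ≤ distNearestInt (∑ i, (q i : ℝ) * x i) := by
  obtain ⟨μ, hμ, ε, hε, hdio⟩ := hx
  have hμ0 : 0 ≤ μ := (Nat.cast_nonneg d).trans hμ
  refine ⟨|Real.log ε| + μ, by positivity, fun n hn => ?_⟩
  have hn' : (1 : ℝ) ≤ n := by exact_mod_cast hn
  have hpos : 0 < ε * (n : ℝ) ^ (-μ) := by positivity
  refine ⟨min 1 (ε * (n : ℝ) ^ (-μ)), lt_min one_pos hpos, min_le_left _ _, ?_, ?_⟩
  · have hlogn : Real.log n ≤ n := (Real.log_le_sub_one_of_pos (by linarith)).trans (by linarith)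
    rcases min_choice 1 (ε * (n : ℝ) ^ (-μ)) with h | h <;> rw [h]
    · rw [Real.log_one]
      have : 0 ≤ (|Real.log ε| + μ) * n := by positivity
      linarith
    · rw [Real.log_mul hε.ne' (by positivity), Real.log_rpow (by linarith)]
      nlinarith [neg_abs_le (Real.log ε), le_mul_of_one_le_right (abs_nonneg (Real.log ε)) hn',
        mul_le_mul_of_nonneg_left hlogn hμ0]
  · intro q hq hqn
    refine (min_le_right _ _).trans (le_of_lt (lt_of_le_of_lt ?_ (hdio q hq)))
    exact mul_le_mul_of_nonneg_left (Real.rpow_le_rpow_of_nonpos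
      (zero_lt_one.trans_le (one_le_qnorm hq)) (qnorm_le hqn) (neg_nonpos.2 hμ0)) hε.le

theorem betaProd_zero {d : ℕ} (x : Fin d → ℝ) : betaProd x 0 0 0 = 1 := by
  refine prod_eq_one fun p hp => absurd ?_ (mem_filter.1 hp).2.2
  simp only [mem_filter, mem_product, mem_range, Fintype.mem_piFinset] at hp
  exact Prod.ext (by omega) (funext fun i => by have := hp.1.2 i; simp; omega)

theorem abs_betaProd_eq {d : ℕ} (x : Fin d → ℝ) (n ℓ : ℕ) (m : Fin d → ℕ) :
    |betaProd x n ℓ m| = ∏ j ∈ Fintype.piFinset (fun _ : Fin d => range (n + 1)),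
      ∏ i ∈ (range (n + 1)).filter (fun i => i + ∑ k, j k ≤ n ∧ (i, j) ≠ (ℓ, m)),
        |(ℓ + ∑ k, ((m k : ℝ) - j k) * x k) - i| := by
  rw [betaProd, abs_prod, prod_filter, prod_product_right]
  refine prod_congr rfl fun j _ => ?_
  rw [prod_filter]
  refine prod_congr rfl fun i _ => ?_
  rw [add_sub_right_comm]

theorem mul_factorial_le_two_pow_mul_prod_fiber {d : ℕ} {x : Fin d → ℝ} {n ℓ : ℕ}
    {m j : Fin d → ℕ} {δ : ℝ} (hδ : δ ≤ 1)
    (hsep : j ≠ m → δ ≤ distNearestInt (∑ k, ((m k : ℝ) - j k) * x k)) :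
    δ * (n - ∑ k, j k)! ≤ 2 ^ (2 * (n - ∑ k, j k) + 1) *
      ∏ i ∈ (range (n + 1)).filter (fun i => i + ∑ k, j k ≤ n ∧ (i, j) ≠ (ℓ, m)),
        |(ℓ + ∑ k, ((m k : ℝ) - j k) * x k) - i| := by
  set y := ∑ k, ((m k : ℝ) - j k) * x k
  by_cases hj : ∑ k, j k ≤ n
  swap
  · rw [filter_false_of_mem fun i _ h => hj (by omega), prod_empty,
      Nat.sub_eq_zero_of_le (by omega)]
    norm_num
    linarith
  apply mul_factorial_le_two_pow_mul_prod_abs_sub hδ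
  · intro i hi
    simp only [mem_filter, mem_range] at hi ⊢
    omega
  · intro i hi hround
    simp only [mem_filter, mem_range] at hi ⊢
    refine ⟨by omega, by omega, fun h => hround ?_⟩
    obtain ⟨rfl, rfl⟩ := Prod.mk.inj h
    simp [y]
  · intro i hi
    by_cases hjm : j = m
    · subst hjm
      have hi : (i : ℤ) ≠ ℓ := by
        have := (mem_filter.1 hi).2.2
        exact_mod_cast fun h => this (by rw [h])
      have h1 : (1 : ℝ) ≤ |((ℓ - i : ℤ) : ℝ)| := by
        exact_mod_cast Int.one_le_abs (sub_ne_zero.2 hi.symm)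
      simp only [y, sub_self, zero_mul, sum_const_zero, add_zero]
      push_cast at h1
      linarith
    · calc δ ≤ distNearestInt y := hsep hjm
        _ ≤ |ℓ + y - i| := by
          rw [show (ℓ : ℝ) + y - i = y - ((i - ℓ : ℤ) : ℝ) by push_cast; ring]
          exact round_le y _

theorem sum_log_le_log_abs_betaProd {d : ℕ} {x : Fin d → ℝ} {n ℓ : ℕ} {m : Fin d → ℕ} {δ : ℝ}
    (hδ0 : 0 < δ) (hδ1 : δ ≤ 1)
    (hsep : ∀ j ∈ Fintype.piFinset (fun _ : Fin d => range (n + 1)), j ≠ m →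
      δ ≤ distNearestInt (∑ k, ((m k : ℝ) - j k) * x k)) :
    ∑ j ∈ Fintype.piFinset (fun _ : Fin d => range (n + 1)),
        (Real.log δ + Real.log (n - ∑ k, j k)! - (2 * (n - ∑ k, j k : ℕ) + 1) * Real.log 2) ≤
      Real.log |betaProd x n ℓ m| := by
  have hprod : ∏ j ∈ Fintype.piFinset (fun _ : Fin d => range (n + 1)),
      δ * (n - ∑ k, j k)! / 2 ^ (2 * (n - ∑ k, j k) + 1) ≤ |betaProd x n ℓ m| := by
    rw [abs_betaProd_eq]
    refine prod_le_prod (fun j _ => by positivity) fun j hj => ?_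
    rw [div_le_iff₀' (by positivity)]
    exact mul_factorial_le_two_pow_mul_prod_fiber hδ1 (hsep j hj)
  refine le_of_eq_of_le ?_ (Real.log_le_log (prod_pos fun j _ => by positivity) hprod)
  rw [Real.log_prod fun j _ => by positivity]
  refine sum_congr rfl fun j _ => ?_
  rw [Real.log_div (by positivity) (by positivity), Real.log_mul hδ0.ne' (by positivity),
    Real.log_pow]
  push_cast
  ring

theorem log_abs_betaProd_ge_of_separated {d n ℓ : ℕ} {x : Fin d → ℝ} {m : Fin d → ℕ}
    (hn : 1 ≤ n) (hm : ∀ i, m i ≤ n) {A δ : ℝ} (hδ0 : 0 < δ) (hδ1 : δ ≤ 1)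
    (hlogδ : -(A * n) ≤ Real.log δ)
    (hsep : ∀ q : Fin d → ℤ, q ≠ 0 → (∀ i, (q i).natAbs ≤ n) →
      δ ≤ distNearestInt (∑ i, (q i : ℝ) * x i)) :
    (n : ℝ) ^ (d + 1) * Real.log n / (d + 1)! - 2 ^ d * (A + 1 + 3 * Real.log 2) * n ^ (d + 1) ≤
      Real.log |betaProd x n ℓ m| := by
  set B := A + 1 + 3 * Real.log 2
  have hn' : (1 : ℝ) ≤ n := by exact_mod_cast hn
  have hB : 0 ≤ B := by nlinarith [Real.log_nonpos hδ0.le hδ1, Real.log_pos one_lt_two]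
  have hlow := sum_log_le_log_abs_betaProd (x := x) (n := n) (ℓ := ℓ) (m := m) hδ0 hδ1
    fun j hj hjm => by
      have hj := Fintype.mem_piFinset.1 hj
      have := hsep (fun k => (m k : ℤ) - j k)
        (fun h => hjm (funext fun k => by have := congrFun h k; simp at this; omega))
        (fun k => by have := hm k; have := mem_range.1 (hj k); omega)
      simpa using this
  have hfiber : ∀ j ∈ Fintype.piFinset (fun _ : Fin d => range (n + 1)),
      ((n - ∑ k, j k : ℕ) : ℝ) * Real.log n - B * n ≤
        Real.log δ + Real.log (n - ∑ k, j k)! - (2 * (n - ∑ k, j k : ℕ) + 1) * Real.log 2 := by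
    intro j _
    have hL : ((n - ∑ k, j k : ℕ) : ℝ) ≤ n := by exact_mod_cast Nat.sub_le _ _
    have := mul_log_sub_le_log_factorial (n - ∑ k, j k) (by positivity : (0 : ℝ) < n)
    nlinarith [Real.log_pos one_lt_two]
  have hcard :
      ((Fintype.piFinset (fun _ : Fin d => range (n + 1))).card : ℝ) ≤ 2 ^ d * n ^ d := by
    rw [Fintype.card_piFinset, prod_const, card_range, card_univ, Fintype.card_fin, ← mul_pow]
    push_cast
    gcongr
    linarith
  have hsimplex := mul_le_mul_of_nonneg_right
    (pow_succ_div_factorial_le_sum_sub_sum d (le_refl n)) (Real.log_nonneg hn')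
  have hcard' := mul_le_mul_of_nonneg_right hcard (by positivity : 0 ≤ B * n)
  calc (n : ℝ) ^ (d + 1) * Real.log n / (d + 1)! - 2 ^ d * B * n ^ (d + 1)
      ≤ (∑ j ∈ Fintype.piFinset (fun _ : Fin d => range (n + 1)), ((n - ∑ k, j k : ℕ) : ℝ)) *
          Real.log n - (Fintype.piFinset (fun _ : Fin d => range (n + 1))).card * (B * n) := by
        rw [mul_div_right_comm]
        linarith [show (2 : ℝ) ^ d * B * n ^ (d + 1) = 2 ^ d * n ^ d * (B * n) by ring]
    _ = ∑ j ∈ Fintype.piFinset (fun _ : Fin d => range (n + 1)),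
          (((n - ∑ k, j k : ℕ) : ℝ) * Real.log n - B * n) := by
        rw [sum_sub_distrib, sum_mul, sum_const, nsmul_eq_mul]
    _ ≤ _ := sum_le_sum hfiber
    _ ≤ _ := hlow

theorem log_betaProd_lower_general (d : ℕ) (x : Fin d → ℝ) (hx : IsDiophantine x) :
    ∃ C : ℝ, 0 < C ∧ ∀ n : ℕ, ∀ ℓ ≤ n, ∀ m : Fin d → ℕ, (∀ i, m i ≤ n) →
      Real.log |betaProd x n ℓ m| ≥
        (n : ℝ) ^ (d + 1) * Real.log n / (d + 1).factorial - C * (n : ℝ) ^ (d + 1) := by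
  obtain ⟨A, hA, hsep⟩ := hx.exists_separation
  refine ⟨2 ^ d * (A + 1 + 3 * Real.log 2), by positivity, fun n ℓ hℓ m hm => ?_⟩
  rcases Nat.eq_zero_or_pos n with rfl | hn
  · obtain rfl : ℓ = 0 := by omega
    obtain rfl : m = 0 := funext fun i => Nat.le_zero.1 (hm i)
    simp [betaProd_zero]
  obtain ⟨δ, hδ0, hδ1, hlogδ, hδ⟩ := hsep n hn
  exact log_abs_betaProd_ge_of_separated hn hm hδ0 hδ1 hlogδ hδ

/-- **Proposition.** For Diophantine `x`,
`log |β(ℓ,m)| ≥ n^{d+1} log n / (d+1)! - C n^{d+1}`. -/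
theorem log_betaProd_lower (d : ℕ) (hd : 1 ≤ d) (x : Fin d → ℝ) (hx : IsDiophantine x) :
    ∃ C : ℝ, 0 < C ∧ ∀ n : ℕ, ∀ ℓ ≤ n, ∀ m : Fin d → ℕ, (∀ i, m i ≤ n) →
      Real.log |betaProd x n ℓ m| ≥
        (n : ℝ) ^ (d + 1) * Real.log n / (d + 1).factorial - C * (n : ℝ) ^ (d + 1) :=
  log_betaProd_lower_general d x hx
end

section
/- Let x ≤ y be integers and let α ∈ ℝ. Then ∏_{j=x}^{y} |j − α| ≥ ⟨α⟩ · ((y − x)/(2e))^{y−x}. -/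
open Real

lemma pas_dist_le (α : ℝ) (j : ℤ) : distNearestInt α ≤ |(j : ℝ) - α| := by
  unfold distNearestInt
  rcases eq_or_ne j (round α) with h | h
  · rw [h, abs_sub_comm]
  · have h1 : |α - (round α : ℝ)| ≤ 1/2 := abs_sub_round α
    have h2 : (1:ℝ) ≤ |(j:ℝ) - (round α : ℝ)| := by
      have hne : j - round α ≠ 0 := sub_ne_zero.mpr h
      have h3 : (1:ℤ) ≤ |j - round α| := Int.one_le_abs hne
      calc (1:ℝ) = ((1:ℤ):ℝ) := by norm_num
        _ ≤ ((|j - round α| : ℤ) : ℝ) := by exact_mod_cast h3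
        _ = |(j:ℝ) - (round α : ℝ)| := by push_cast; ring_nf
    have h3 : |(j:ℝ) - (round α : ℝ)| ≤ |(j:ℝ) - α| + |α - (round α : ℝ)| :=
      abs_sub_le _ _ _
    linarith

lemma pas_succ_pow_le (k : ℕ) (hk : 1 ≤ k) :
    ((k:ℝ)+1)^k ≤ (k:ℝ)^k * Real.exp 1 := by
  have hk0 : (0:ℝ) < k := by exact_mod_cast hk
  have h1 : (1/(k:ℝ) + 1) ≤ Real.exp (1/(k:ℝ)) := Real.add_one_le_exp _
  have h2 : (1/(k:ℝ) + 1)^k ≤ (Real.exp (1/(k:ℝ)))^k :=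
    pow_le_pow_left₀ (by positivity) h1 k
  have h3 : (Real.exp (1/(k:ℝ)))^k = Real.exp 1 := by
    rw [← Real.exp_nat_mul]
    congr 1
    field_simp
  have h4 : ((k:ℝ)+1)^k = (1/(k:ℝ)+1)^k * (k:ℝ)^k := by
    rw [← mul_pow]
    congr 1
    field_simp
    ring
  rw [h4]
  calc (1/(k:ℝ)+1)^k * (k:ℝ)^k ≤ Real.exp 1 * (k:ℝ)^k := by
        apply mul_le_mul_of_nonneg_right _ (by positivity)
        rw [← h3]; exact h2
    _ = (k:ℝ)^k * Real.exp 1 := by ring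

lemma pas_fact_lb' (n : ℕ) (hn : 1 ≤ n) :
    (3/2) * (n:ℝ)^n ≤ (n.factorial : ℝ) * Real.exp 1 ^ n := by
  induction n, hn using Nat.le_induction with
  | base =>
    simp only [pow_one, Nat.factorial_one, Nat.cast_one, one_mul, Nat.cast_one]
    nlinarith [Real.exp_one_gt_d9]
  | succ k hk ih =>
    have key := pas_succ_pow_le k hk
    have e0 : (0:ℝ) < Real.exp 1 := Real.exp_pos 1
    have f0 : (0:ℝ) ≤ (k.factorial : ℝ) := by positivity
    rw [Nat.factorial_succ]
    push_cast
    rw [pow_succ, pow_succ]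
    calc (3/2) * (((k:ℝ)+1)^k * ((k:ℝ)+1))
        = ((3/2) * ((k:ℝ)+1)^k) * ((k:ℝ)+1) := by ring
      _ ≤ ((3/2) * ((k:ℝ)^k * Real.exp 1)) * ((k:ℝ)+1) := by
          apply mul_le_mul_of_nonneg_right _ (by positivity)
          nlinarith [key]
      _ = ((3/2) * (k:ℝ)^k) * Real.exp 1 * ((k:ℝ)+1) := by ring
      _ ≤ ((k.factorial : ℝ) * Real.exp 1 ^ k) * Real.exp 1 * ((k:ℝ)+1) := by
          apply mul_le_mul_of_nonneg_right _ (by positivity)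
          exact mul_le_mul_of_nonneg_right ih (le_of_lt e0)
      _ = ((k:ℝ)+1) * (k.factorial : ℝ) * (Real.exp 1 ^ k * Real.exp 1) := by ring

lemma pas_fact_lb (n : ℕ) (hn : 1 ≤ n) :
    (3/2) * ((n:ℝ)/Real.exp 1)^n ≤ (n.factorial : ℝ) := by
  have h := pas_fact_lb' n hn
  have e0 : (0:ℝ) < Real.exp 1 ^ n := by positivity
  rw [div_pow, ← mul_div_assoc, div_le_iff₀ e0]
  linarith

lemma pas_conv (a b : ℕ) (ha : 1 ≤ a) (hb : 1 ≤ b) :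
    (((a:ℝ)+(b:ℝ))/2)^(a+b) ≤ (a:ℝ)^a * (b:ℝ)^b := by
  have hA : (0:ℝ) < (a:ℝ) := by exact_mod_cast ha
  have hB : (0:ℝ) < (b:ℝ) := by exact_mod_cast hb
  set M : ℝ := ((a:ℝ)+(b:ℝ))/2 with hM
  have hMpos : (0:ℝ) < M := by rw [hM]; positivity
  have l1 : Real.log (M/(a:ℝ)) ≤ M/(a:ℝ) - 1 := Real.log_le_sub_one_of_pos (by positivity)
  have l2 : Real.log (M/(b:ℝ)) ≤ M/(b:ℝ) - 1 := Real.log_le_sub_one_of_pos (by positivity)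
  have ld1 : Real.log (M/(a:ℝ)) = Real.log M - Real.log (a:ℝ) :=
    Real.log_div (ne_of_gt hMpos) (ne_of_gt hA)
  have ld2 : Real.log (M/(b:ℝ)) = Real.log M - Real.log (b:ℝ) :=
    Real.log_div (ne_of_gt hMpos) (ne_of_gt hB)
  have l1' : Real.log M - Real.log (a:ℝ) ≤ M/(a:ℝ) - 1 := by rw [← ld1]; exact l1
  have l2' : Real.log M - Real.log (b:ℝ) ≤ M/(b:ℝ) - 1 := by rw [← ld2]; exact l2
  have m1 : (a:ℝ) * Real.log M - (a:ℝ) * Real.log (a:ℝ) ≤ M - (a:ℝ) := by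
    have h := mul_le_mul_of_nonneg_left l1' hA.le
    have h2 : (a:ℝ) * (M/(a:ℝ) - 1) = M - (a:ℝ) := by field_simp
    rw [mul_sub, h2] at h
    exact h
  have m2 : (b:ℝ) * Real.log M - (b:ℝ) * Real.log (b:ℝ) ≤ M - (b:ℝ) := by
    have h := mul_le_mul_of_nonneg_left l2' hB.le
    have h2 : (b:ℝ) * (M/(b:ℝ) - 1) = M - (b:ℝ) := by field_simp
    rw [mul_sub, h2] at h
    exact h
  have hkey : ((a:ℝ)+(b:ℝ)) * Real.log M ≤ (a:ℝ) * Real.log (a:ℝ) + (b:ℝ) * Real.log (b:ℝ) := by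
    have hM2 : 2 * M = (a:ℝ) + (b:ℝ) := by rw [hM]; ring
    nlinarith [m1, m2]
  have lhs : M^(a+b) = Real.exp ((((a+b):ℕ):ℝ) * Real.log M) := by
    rw [← Real.log_pow, Real.exp_log (by positivity)]
  have rhs : (a:ℝ)^a * (b:ℝ)^b
      = Real.exp ((a:ℝ) * Real.log (a:ℝ) + (b:ℝ) * Real.log (b:ℝ)) := by
    rw [Real.exp_add, ← Real.log_pow, ← Real.log_pow,
      Real.exp_log (by positivity), Real.exp_log (by positivity)]
  rw [lhs, rhs]
  apply Real.exp_le_exp.mpr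
  push_cast
  exact hkey

lemma pas_FIN (A B : ℕ) (hA : 1 ≤ A) :
    2 * (((A:ℝ)+(B:ℝ))/(2*Real.exp 1))^(A+B) ≤ (A.factorial : ℝ) * (B.factorial : ℝ) := by
  have e0 : (0:ℝ) < Real.exp 1 := Real.exp_pos 1
  rcases Nat.eq_zero_or_pos B with hB | hB
  · subst hB
    simp only [Nat.cast_zero, add_zero, Nat.factorial_zero, Nat.cast_one, mul_one]
    have h1 : ((A:ℝ)/(2*Real.exp 1))^A = (1/2)^A * ((A:ℝ)/Real.exp 1)^A := by
      rw [← mul_pow]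
      congr 1
      field_simp
    rw [h1]
    have h2 : ((1:ℝ)/2)^A ≤ 1/2 := by
      calc ((1:ℝ)/2)^A ≤ (1/2)^1 := pow_le_pow_of_le_one (by norm_num) (by norm_num) hA
        _ = 1/2 := pow_one _
    have h3 : (0:ℝ) ≤ ((A:ℝ)/Real.exp 1)^A := by positivity
    have h4 := pas_fact_lb A hA
    nlinarith [mul_le_mul_of_nonneg_right h2 h3]
  · have f1 := pas_fact_lb A hA
    have f2 := pas_fact_lb B hB
    have hc := pas_conv A B hA hB
    have hEn : (0:ℝ) < Real.exp 1 ^ (A+B) := by positivity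
    have key : (((A:ℝ)+(B:ℝ))/(2*Real.exp 1))^(A+B)
        = (((A:ℝ)+(B:ℝ))/2)^(A+B) / Real.exp 1 ^ (A+B) := by
      rw [← div_pow, div_div]
    rw [key]
    have hEA : (Real.exp 1)^A ≠ 0 := by positivity
    have hEB : (Real.exp 1)^B ≠ 0 := by positivity
    calc 2 * ((((A:ℝ)+(B:ℝ))/2)^(A+B) / Real.exp 1 ^ (A+B))
        ≤ 2 * (((A:ℝ)^A * (B:ℝ)^B) / Real.exp 1 ^ (A+B)) := by
          apply mul_le_mul_of_nonneg_left _ (by norm_num)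
          exact (div_le_div_iff_of_pos_right hEn).mpr hc
      _ ≤ (9/4) * (((A:ℝ)^A * (B:ℝ)^B) / Real.exp 1 ^ (A+B)) := by
          have hp : (0:ℝ) ≤ ((A:ℝ)^A * (B:ℝ)^B) / Real.exp 1 ^ (A+B) := by positivity
          nlinarith
      _ = ((3/2) * ((A:ℝ)/Real.exp 1)^A) * ((3/2) * ((B:ℝ)/Real.exp 1)^B) := by
          rw [div_pow, div_pow, pow_add]
          field_simp
          ring
      _ ≤ (A.factorial : ℝ) * (B.factorial : ℝ) := by
          apply mul_le_mul f1 f2 (by positivity) (by positivity)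

lemma pas_core_end (δ : ℝ) (h0 : 0 ≤ δ) (h1 : δ ≤ 1) (A B n : ℕ) (hA : 1 ≤ A)
    (hn : A + B = n) :
    min δ (1-δ) * ((n:ℝ)/(2*Real.exp 1))^n ≤ (δ*(1-δ)) * ((A.factorial:ℝ) * (B.factorial:ℝ)) := by
  have hmin0 : 0 ≤ min δ (1-δ) := le_min h0 (by linarith)
  have hmin : min δ (1-δ) * (1/2) ≤ δ * (1-δ) := by
    rcases le_total δ (1-δ) with h | h
    · rw [min_eq_left h]; nlinarith
    · rw [min_eq_right h]; nlinarith
  have hcast : ((A:ℝ)+(B:ℝ)) = ((n:ℕ):ℝ) := by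
    rw [← hn]; push_cast; ring
  have hF' := pas_FIN A B hA
  rw [hcast, hn] at hF'
  have hδδ : 0 ≤ δ * (1-δ) := mul_nonneg h0 (by linarith)
  calc min δ (1-δ) * ((n:ℝ)/(2*Real.exp 1))^n
      = (min δ (1-δ) * (1/2)) * (2 * ((n:ℝ)/(2*Real.exp 1))^n) := by ring
    _ ≤ (δ*(1-δ)) * ((A.factorial:ℝ) * (B.factorial:ℝ)) :=
        mul_le_mul hmin hF' (by positivity) hδδ

lemma pas_prod_range_one (a : ℕ) :
    ∏ k ∈ Finset.range a, ((k:ℝ)+1) = (a.factorial : ℝ) := by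
  exact_mod_cast Finset.prod_range_add_one_eq_factorial a

lemma pas_prod_range_two_nat (a : ℕ) :
    ∏ k ∈ Finset.range a, (k+2) = (a+1).factorial := by
  induction a with
  | zero => simp
  | succ n ih =>
    rw [Finset.prod_range_succ, ih, Nat.factorial_succ (n+1)]
    ring

lemma pas_prod_range_two (a : ℕ) :
    ∏ k ∈ Finset.range a, ((k:ℝ)+2) = ((a+1).factorial : ℝ) := by
  exact_mod_cast pas_prod_range_two_nat a

lemma pas_prod_Ico (a c : ℕ) (h : a ≤ c) :
    (a.factorial:ℝ) * ∏ k ∈ Finset.Ico a c, ((k:ℝ)+1) = (c.factorial:ℝ) := by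
  rw [← pas_prod_range_one a, ← pas_prod_range_one c]
  simp only [Finset.range_eq_Ico]
  exact Finset.prod_Ico_consecutive _ (Nat.zero_le a) h

lemma pas_pairProd (δ : ℝ) (h0 : 0 ≤ δ) (h1 : δ ≤ 1) (c : ℕ) :
    (c.factorial:ℝ) * ((c+1).factorial:ℝ)
      ≤ ∏ k ∈ Finset.range c, (((k:ℝ)+1+δ)*((k:ℝ)+2-δ)) := by
  rw [← pas_prod_range_one c, ← pas_prod_range_two c, ← Finset.prod_mul_distrib]
  apply Finset.prod_le_prod
  · intro k _; positivity
  · intro k _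
    have hk : (0:ℝ) ≤ (k:ℝ) := Nat.cast_nonneg k
    nlinarith [mul_nonneg h0 (by linarith : (0:ℝ) ≤ 1 - δ)]

lemma pas_CORE (a b : ℕ) (hb : 1 ≤ b) (δ : ℝ) (h0 : 0 ≤ δ) (h1 : δ ≤ 1) :
    min δ (1-δ) * (((a+b : ℕ):ℝ)/(2*Real.exp 1))^(a+b)
      ≤ (∏ k ∈ Finset.range (a+1), ((k:ℝ)+δ)) * ∏ k ∈ Finset.range b, ((k:ℝ)+1-δ) := by
  obtain ⟨b', rfl⟩ : ∃ b', b = b'+1 := ⟨b-1, by omega⟩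
  have eL : (∏ k ∈ Finset.range (a+1), ((k:ℝ)+δ))
      = (∏ k ∈ Finset.range a, ((k:ℝ)+1+δ)) * δ := by
    rw [Finset.prod_range_succ' (fun k => (k:ℝ)+δ) a]
    congr 1
    · exact Finset.prod_congr rfl (fun k _ => by push_cast; ring)
    · norm_num
  have eR : (∏ k ∈ Finset.range (b'+1), ((k:ℝ)+1-δ))
      = (∏ k ∈ Finset.range b', ((k:ℝ)+2-δ)) * (1-δ) := by
    rw [Finset.prod_range_succ' (fun k => (k:ℝ)+1-δ) b']
    congr 1
    · exact Finset.prod_congr rfl (fun k _ => by push_cast; ring)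
    · norm_num
  rw [eL, eR]
  have hδδ : (0:ℝ) ≤ δ * (1-δ) := mul_nonneg h0 (by linarith)
  rcases le_total a b' with hab | hab
  · -- a ≤ b'
    have hsplit : (∏ k ∈ Finset.range b', ((k:ℝ)+2-δ))
        = (∏ k ∈ Finset.range a, ((k:ℝ)+2-δ)) * ∏ k ∈ Finset.Ico a b', ((k:ℝ)+2-δ) := by
      simp only [Finset.range_eq_Ico]
      exact (Finset.prod_Ico_consecutive (fun k => ((k:ℝ)+2-δ)) (Nat.zero_le a) hab).symm
    have P1 := pas_pairProd δ h0 h1 a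
    have P2 : (∏ k ∈ Finset.Ico a b', ((k:ℝ)+1)) ≤ ∏ k ∈ Finset.Ico a b', ((k:ℝ)+2-δ) :=
      Finset.prod_le_prod (fun k _ => by positivity) (fun k _ => by linarith)
    have hfac : ((a.factorial:ℝ) * ((a+1).factorial:ℝ)) * ∏ k ∈ Finset.Ico a b', ((k:ℝ)+1)
        = ((a+1).factorial:ℝ) * (b'.factorial:ℝ) := by
      linear_combination (((a+1).factorial:ℝ)) * pas_prod_Ico a b' hab
    have hLR : (∏ k ∈ Finset.range a, ((k:ℝ)+1+δ)) * (∏ k ∈ Finset.range b', ((k:ℝ)+2-δ))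
        = (∏ k ∈ Finset.range a, (((k:ℝ)+1+δ)*((k:ℝ)+2-δ)))
          * ∏ k ∈ Finset.Ico a b', ((k:ℝ)+2-δ) := by
      rw [hsplit, Finset.prod_mul_distrib]
      ring
    calc min δ (1-δ) * (((a+(b'+1) : ℕ):ℝ)/(2*Real.exp 1))^(a+(b'+1))
        ≤ (δ*(1-δ)) * (((a+1).factorial:ℝ) * (b'.factorial:ℝ)) :=
          pas_core_end δ h0 h1 (a+1) b' (a+(b'+1)) (by omega) (by omega)
      _ ≤ (δ*(1-δ)) * ((∏ k ∈ Finset.range a, ((k:ℝ)+1+δ)) * ∏ k ∈ Finset.range b', ((k:ℝ)+2-δ)) := by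
          apply mul_le_mul_of_nonneg_left _ hδδ
          rw [hLR, ← hfac]
          refine mul_le_mul P1 P2 (Finset.prod_nonneg fun k _ => by positivity)
            (Finset.prod_nonneg fun k _ => ?_)
          have hk : (0:ℝ) ≤ (k:ℝ) := Nat.cast_nonneg k
          have h2' : (0:ℝ) ≤ (k:ℝ)+2-δ := by linarith
          exact mul_nonneg (by linarith) h2'
      _ = ((∏ k ∈ Finset.range a, ((k:ℝ)+1+δ)) * δ)
            * ((∏ k ∈ Finset.range b', ((k:ℝ)+2-δ)) * (1-δ)) := by ring
  · -- b' ≤ a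
    have hsplit : (∏ k ∈ Finset.range a, ((k:ℝ)+1+δ))
        = (∏ k ∈ Finset.range b', ((k:ℝ)+1+δ)) * ∏ k ∈ Finset.Ico b' a, ((k:ℝ)+1+δ) := by
      simp only [Finset.range_eq_Ico]
      exact (Finset.prod_Ico_consecutive (fun k => ((k:ℝ)+1+δ)) (Nat.zero_le b') hab).symm
    have P1 := pas_pairProd δ h0 h1 b'
    have P2 : (∏ k ∈ Finset.Ico b' a, ((k:ℝ)+1)) ≤ ∏ k ∈ Finset.Ico b' a, ((k:ℝ)+1+δ) :=
      Finset.prod_le_prod (fun k _ => by positivity) (fun k _ => by linarith)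
    have hfac : ((b'.factorial:ℝ) * ((b'+1).factorial:ℝ)) * ∏ k ∈ Finset.Ico b' a, ((k:ℝ)+1)
        = ((b'+1).factorial:ℝ) * (a.factorial:ℝ) := by
      linear_combination (((b'+1).factorial:ℝ)) * pas_prod_Ico b' a hab
    have hLR : (∏ k ∈ Finset.range a, ((k:ℝ)+1+δ)) * (∏ k ∈ Finset.range b', ((k:ℝ)+2-δ))
        = (∏ k ∈ Finset.range b', (((k:ℝ)+1+δ)*((k:ℝ)+2-δ)))
          * ∏ k ∈ Finset.Ico b' a, ((k:ℝ)+1+δ) := by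
      rw [hsplit, Finset.prod_mul_distrib]
      ring
    calc min δ (1-δ) * (((a+(b'+1) : ℕ):ℝ)/(2*Real.exp 1))^(a+(b'+1))
        ≤ (δ*(1-δ)) * (((b'+1).factorial:ℝ) * (a.factorial:ℝ)) :=
          pas_core_end δ h0 h1 (b'+1) a (a+(b'+1)) (by omega) (by omega)
      _ ≤ (δ*(1-δ)) * ((∏ k ∈ Finset.range a, ((k:ℝ)+1+δ)) * ∏ k ∈ Finset.range b', ((k:ℝ)+2-δ)) := by
          apply mul_le_mul_of_nonneg_left _ hδδ
          rw [hLR, ← hfac]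
          refine mul_le_mul P1 P2 (Finset.prod_nonneg fun k _ => by positivity)
            (Finset.prod_nonneg fun k _ => ?_)
          have hk : (0:ℝ) ≤ (k:ℝ) := Nat.cast_nonneg k
          have h2' : (0:ℝ) ≤ (k:ℝ)+2-δ := by linarith
          exact mul_nonneg (by linarith) h2'
      _ = ((∏ k ∈ Finset.range a, ((k:ℝ)+1+δ)) * δ)
            * ((∏ k ∈ Finset.range b', ((k:ℝ)+2-δ)) * (1-δ)) := by ring

lemma pas_CORE1 (n : ℕ) (ε : ℝ) (hε : 0 ≤ ε) :
    ε * ((n:ℝ)/(2*Real.exp 1))^n ≤ ∏ k ∈ Finset.range (n+1), ((k:ℝ)+ε) := by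
  have eL : (∏ k ∈ Finset.range (n+1), ((k:ℝ)+ε))
      = (∏ k ∈ Finset.range n, ((k:ℝ)+1+ε)) * ε := by
    rw [Finset.prod_range_succ' (fun k => (k:ℝ)+ε) n]
    congr 1
    · exact Finset.prod_congr rfl (fun k _ => by push_cast; ring)
    · norm_num
  rw [eL]
  rcases Nat.eq_zero_or_pos n with h | h
  · subst h
    norm_num
  · have h1 : (n.factorial:ℝ) ≤ ∏ k ∈ Finset.range n, ((k:ℝ)+1+ε) := by
      rw [← pas_prod_range_one n]
      exact Finset.prod_le_prod (fun k _ => by positivity) (fun k _ => by linarith)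
    have h2 := pas_fact_lb n h
    have h3 : ((n:ℝ)/(2*Real.exp 1))^n ≤ ((n:ℝ)/Real.exp 1)^n := by
      apply pow_le_pow_left₀ (by positivity)
      rw [div_le_div_iff₀ (by positivity) (by positivity)]
      nlinarith [Real.exp_pos 1, Nat.cast_nonneg (α := ℝ) n]
    have h4 : ((n:ℝ)/Real.exp 1)^n ≤ (n.factorial:ℝ) := by
      nlinarith [pow_nonneg (by positivity : (0:ℝ) ≤ (n:ℝ)/Real.exp 1) n]
    calc ε * ((n:ℝ)/(2*Real.exp 1))^n
        ≤ ε * ((n:ℝ)/Real.exp 1)^n := mul_le_mul_of_nonneg_left h3 hε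
      _ ≤ ε * (n.factorial:ℝ) := mul_le_mul_of_nonneg_left h4 hε
      _ ≤ ε * ∏ k ∈ Finset.range n, ((k:ℝ)+1+ε) := mul_le_mul_of_nonneg_left h1 hε
      _ = (∏ k ∈ Finset.range n, ((k:ℝ)+1+ε)) * ε := mul_comm _ _

lemma pas_prod_Icc_asc (x y : ℤ) (h : x ≤ y) (f : ℤ → ℝ) :
    ∏ j ∈ Finset.Icc x y, f j = ∏ k ∈ Finset.range ((y-x).toNat + 1), f (x + (k:ℤ)) := by
  apply Finset.prod_nbij' (fun j => (j - x).toNat) (fun k => x + (k:ℤ))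
  · intro j hj
    simp only [Finset.mem_Icc] at hj
    simp only [Finset.mem_range]
    omega
  · intro k hk
    simp only [Finset.mem_range] at hk
    simp only [Finset.mem_Icc]
    omega
  · intro j hj
    simp only [Finset.mem_Icc] at hj
    omega
  · intro k hk
    simp only [Finset.mem_range] at hk
    omega
  · intro j hj
    simp only [Finset.mem_Icc] at hj
    congr 1
    omega

lemma pas_prod_Icc_desc (x y : ℤ) (h : x ≤ y) (f : ℤ → ℝ) :
    ∏ j ∈ Finset.Icc x y, f j = ∏ k ∈ Finset.range ((y-x).toNat + 1), f (y - (k:ℤ)) := by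
  apply Finset.prod_nbij' (fun j => (y - j).toNat) (fun k => y - (k:ℤ))
  · intro j hj
    simp only [Finset.mem_Icc] at hj
    simp only [Finset.mem_range]
    omega
  · intro k hk
    simp only [Finset.mem_range] at hk
    simp only [Finset.mem_Icc]
    omega
  · intro j hj
    simp only [Finset.mem_Icc] at hj
    omega
  · intro k hk
    simp only [Finset.mem_range] at hk
    omega
  · intro j hj
    simp only [Finset.mem_Icc] at hj
    congr 1
    omega

/-- **Lemma.** For integers `x ≤ y` and real `α`,
`∏_{j=x}^{y} |j - α| ≥ ⟨α⟩ ((y-x)/(2e))^{y-x}`. -/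
theorem prod_abs_sub_ge (x y : ℤ) (hxy : x ≤ y) (α : ℝ) :
    ∏ j ∈ Finset.Icc x y, |(j : ℝ) - α| ≥
      distNearestInt α * (((y : ℝ) - (x : ℝ)) / (2 * Real.exp 1)) ^ (y - x).toNat := by
  rw [ge_iff_le]
  have hn0 : ((y:ℝ) - (x:ℝ)) = (((y-x).toNat : ℕ):ℝ) := by
    have h1 : (((y - x).toNat : ℕ) : ℤ) = y - x := Int.toNat_of_nonneg (by omega)
    calc (y:ℝ) - (x:ℝ) = (((y - x : ℤ)):ℝ) := by push_cast; ring
      _ = (((y-x).toNat : ℕ):ℝ) := by rw [← Int.cast_natCast (R := ℝ), h1]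
  rw [hn0]
  by_cases hx : α < (x:ℝ)
  · have heq : ∏ j ∈ Finset.Icc x y, |(j:ℝ) - α|
        = ∏ k ∈ Finset.range ((y-x).toNat + 1), ((k:ℝ) + ((x:ℝ) - α)) := by
      rw [pas_prod_Icc_asc x y hxy (fun j => |(j:ℝ) - α|)]
      refine Finset.prod_congr rfl (fun k _ => ?_)
      have hk : (0:ℝ) ≤ (k:ℝ) := Nat.cast_nonneg k
      push_cast
      rw [abs_of_nonneg (by linarith)]
      ring
    rw [heq]
    have hd : distNearestInt α ≤ (x:ℝ) - α := by
      have h := pas_dist_le α x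
      rwa [abs_of_nonneg (by linarith)] at h
    calc distNearestInt α * ((((y-x).toNat : ℕ):ℝ)/(2*Real.exp 1))^((y-x).toNat)
        ≤ ((x:ℝ) - α) * ((((y-x).toNat : ℕ):ℝ)/(2*Real.exp 1))^((y-x).toNat) :=
          mul_le_mul_of_nonneg_right hd (by positivity)
      _ ≤ _ := pas_CORE1 ((y-x).toNat) ((x:ℝ) - α) (by linarith)
  · by_cases hy : (y:ℝ) ≤ α
    · have heq : ∏ j ∈ Finset.Icc x y, |(j:ℝ) - α|
          = ∏ k ∈ Finset.range ((y-x).toNat + 1), ((k:ℝ) + (α - (y:ℝ))) := by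
        rw [pas_prod_Icc_desc x y hxy (fun j => |(j:ℝ) - α|)]
        refine Finset.prod_congr rfl (fun k _ => ?_)
        have hk : (0:ℝ) ≤ (k:ℝ) := Nat.cast_nonneg k
        push_cast
        rw [abs_of_nonpos (by linarith)]
        ring
      rw [heq]
      have hd : distNearestInt α ≤ α - (y:ℝ) := by
        have h := pas_dist_le α y
        rwa [abs_of_nonpos (by linarith), neg_sub] at h
      calc distNearestInt α * ((((y-x).toNat : ℕ):ℝ)/(2*Real.exp 1))^((y-x).toNat)
          ≤ (α - (y:ℝ)) * ((((y-x).toNat : ℕ):ℝ)/(2*Real.exp 1))^((y-x).toNat) :=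
            mul_le_mul_of_nonneg_right hd (by positivity)
        _ ≤ _ := pas_CORE1 ((y-x).toNat) (α - (y:ℝ)) (by linarith)
    · -- middle case : x ≤ α < y
      push_neg at hx hy
      set m : ℤ := ⌊α⌋ with hm
      have hfl : (m:ℝ) ≤ α := Int.floor_le α
      have hfu : α < (m:ℝ) + 1 := by
        have := Int.lt_floor_add_one α
        push_cast
        exact_mod_cast this
      have hxm : x ≤ m := Int.le_floor.mpr hx
      have hmy : m + 1 ≤ y := by
        have : m < y := Int.floor_lt.mpr hy
        omega
      have hsplit : Finset.Icc x y = Finset.Icc x m ∪ Finset.Icc (m+1) y := by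
        ext j
        simp only [Finset.mem_Icc, Finset.mem_union]
        omega
      have hdisj : Disjoint (Finset.Icc x m) (Finset.Icc (m+1) y) := by
        rw [Finset.disjoint_left]
        intro j hj hj'
        simp only [Finset.mem_Icc] at hj hj'
        omega
      rw [hsplit, Finset.prod_union hdisj]
      have hL : ∏ j ∈ Finset.Icc x m, |(j:ℝ) - α|
          = ∏ k ∈ Finset.range ((m-x).toNat + 1), ((k:ℝ) + (α - (m:ℝ))) := by
        rw [pas_prod_Icc_desc x m hxm (fun j => |(j:ℝ) - α|)]
        refine Finset.prod_congr rfl (fun k _ => ?_)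
        have hk : (0:ℝ) ≤ (k:ℝ) := Nat.cast_nonneg k
        push_cast
        rw [abs_of_nonpos (by linarith)]
        ring
      have hcount : (y - (m+1)).toNat + 1 = (y - m).toNat := by omega
      have hR : ∏ j ∈ Finset.Icc (m+1) y, |(j:ℝ) - α|
          = ∏ k ∈ Finset.range ((y-m).toNat), ((k:ℝ) + 1 - (α - (m:ℝ))) := by
        rw [pas_prod_Icc_asc (m+1) y hmy (fun j => |(j:ℝ) - α|), hcount]
        refine Finset.prod_congr rfl (fun k _ => ?_)
        have hk : (0:ℝ) ≤ (k:ℝ) := Nat.cast_nonneg k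
        push_cast
        rw [abs_of_nonneg (by linarith)]
        ring
      rw [hL, hR]
      have hmin : distNearestInt α ≤ min (α - (m:ℝ)) (1 - (α - (m:ℝ))) := by
        apply le_min
        · have h := pas_dist_le α m
          rwa [abs_of_nonpos (by linarith), neg_sub] at h
        · have h := pas_dist_le α (m+1)
          push_cast at h
          rw [abs_of_nonneg (by linarith)] at h
          linarith
      have hcore := pas_CORE ((m-x).toNat) ((y-m).toNat) (by omega) (α - (m:ℝ))
        (by linarith) (by linarith)
      have hsum : (m-x).toNat + (y-m).toNat = (y-x).toNat := by omega
      rw [hsum] at hcore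
      calc distNearestInt α * ((((y-x).toNat : ℕ):ℝ)/(2*Real.exp 1))^((y-x).toNat)
          ≤ min (α - (m:ℝ)) (1 - (α - (m:ℝ)))
              * ((((y-x).toNat : ℕ):ℝ)/(2*Real.exp 1))^((y-x).toNat) :=
            mul_le_mul_of_nonneg_right hmin (by positivity)
        _ ≤ _ := hcore
end

section
/- For every d ≥ 1 there exists a constant C_d > 0 such that for all integers n ≥ 2 and all m ∈ {0,1,…,n}^d: log A ≥ n^{d+1} log n / (d+1)! − C_d n^{d+1}, where A = ∏_{k=1}^{n} ∏ k^{k}, the inner product running over all j ∈ ℤ^d with nonnegative coordinates satisfying |j| = n − k and j ≠ m; equivalently, (∑_{k=1}^{n} C(n−k+d−1, d−1) · k log k) − n log n ≥ n^{d+1} log n / (d+1)! − C_d n^{d+1}. -/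
open Real

lemma g_lem (e n : ℕ) : ∑ s ∈ Finset.range n, (s + e).choose e = (n + e).choose (e + 1) := by
  induction n with
  | zero => simp [Nat.choose_eq_zero_of_lt (show e < e + 1 by omega)]
  | succ n ih =>
    rw [Finset.sum_range_succ, ih, show n + 1 + e = (n + e) + 1 by omega,
      Nat.choose_succ_succ]
    simp only [Nat.succ_eq_add_one]
    omega

lemma f_lem (e n : ℕ) : ∑ s ∈ Finset.range n, (n - s) * (s + e).choose e
    = (n + e + 1).choose (e + 2) := by
  induction n with
  | zero => simp [Nat.choose_eq_zero_of_lt (show e + 1 < e + 2 by omega)]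
  | succ n ih =>
    have h1 : ∀ s ∈ Finset.range (n + 1),
        (n + 1 - s) * (s + e).choose e = (n - s) * (s + e).choose e + (s + e).choose e := by
      intro s hs
      have hs' : s ≤ n := by simpa [Nat.lt_succ_iff] using hs
      have : n + 1 - s = (n - s) + 1 := by omega
      rw [this]; ring
    rw [Finset.sum_congr rfl h1, Finset.sum_add_distrib, g_lem, Finset.sum_range_succ,
      Nat.sub_self, ih]
    have hp : (n + e + 1 + 1).choose (e + 2)
        = (n + e + 1).choose (e + 1) + (n + e + 1).choose (e + 2) :=
      Nat.choose_succ_succ _ _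
    rw [show n + 1 + e + 1 = n + e + 1 + 1 by omega, show n + 1 + e = n + e + 1 by omega]
    omega

lemma sumB (e n : ℕ) : ∑ k ∈ Finset.Icc 1 n, (n - k + e).choose e * k
    = (n + e + 1).choose (e + 2) := by
  rw [← f_lem e n]
  refine Finset.sum_nbij' (fun k => n - k) (fun s => n - s) ?_ ?_ ?_ ?_ ?_ <;>
      simp only [Finset.mem_Icc, Finset.mem_range]
  · intro k hk; omega
  · intro s hs; omega
  · intro k hk; omega
  · intro s hs; omega
  · intro k hk
    rw [Nat.sub_sub_self (by omega : k ≤ n), mul_comm]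

lemma sumC (e n : ℕ) : ∑ k ∈ Finset.Icc 1 n, (n - k + e).choose e
    = (n + e).choose (e + 1) := by
  rw [← g_lem e n]
  refine Finset.sum_nbij' (fun k => n - k) (fun s => n - s) ?_ ?_ ?_ ?_ ?_ <;>
      simp only [Finset.mem_Icc, Finset.mem_range]
  · intro k hk; omega
  · intro s hs; omega
  · intro k hk; omega
  · intro s hs; omega
  · intro k hk; trivial

lemma card_G (d s : ℕ) :
    (Finset.piAntidiag (Finset.univ : Finset (Fin d)) s).card = (d + s - 1).choose s := by
  rw [← Finset.map_sym_eq_piAntidiag, Finset.card_map, Finset.sym_univ, Finset.card_univ,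
    Sym.card_sym_eq_choose, Fintype.card_fin]

lemma card_G' (e s : ℕ) :
    (Finset.piAntidiag (Finset.univ : Finset (Fin (e + 1))) s).card = (s + e).choose e := by
  rw [card_G, show e + 1 + s - 1 = s + e by omega, ← Nat.choose_symm (by omega : s ≤ s + e),
    Nat.add_sub_cancel_left]

lemma filter_eq_piAntidiag (d n s : ℕ) (hs : s ≤ n) :
    (Fintype.piFinset fun _ : Fin d => Finset.range (n + 1)).filter
      (fun j => (∑ i, j i) = s) = Finset.piAntidiag Finset.univ s := by
  ext j
  simp only [Finset.mem_filter, Fintype.mem_piFinset, Finset.mem_range, Finset.mem_piAntidiag,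
    Finset.mem_univ, implies_true, and_true, Nat.lt_succ_iff]
  constructor
  · rintro ⟨-, h⟩; exact h
  · intro h
    refine ⟨fun i => ?_, h⟩
    calc j i ≤ ∑ i, j i := Finset.single_le_sum (fun _ _ => Nat.zero_le _) (Finset.mem_univ i)
    _ = s := h
    _ ≤ n := hs
/-- **Estimate for `A`.** With `A = ∏_{k=1}^n ∏_{|j| = n-k, j ≠ m} k^k`, one has
`log A ≥ n^{d+1} log n / (d+1)! - C_d n^{d+1}`; equivalently (via the count of tuples with
`|j| = n - k`), `(∑_{k=1}^n C(n-k+d-1, d-1) k log k) - n log n` obeys the same lower bound. -/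
theorem log_A_lower (d : ℕ) (hd : 1 ≤ d) :
    ∃ C : ℝ, 0 < C ∧ ∀ n : ℕ, 2 ≤ n → ∀ m : Fin d → ℕ, (∀ i, m i ≤ n) →
      Real.log (∏ k ∈ Finset.Icc 1 n,
          ∏ _j ∈ (Fintype.piFinset fun _ : Fin d => Finset.range (n + 1)).filter
              (fun j => (∑ i, j i) = n - k ∧ j ≠ m), (k : ℝ) ^ k) ≥
        (n : ℝ) ^ (d + 1) * Real.log n / (d + 1).factorial - C * (n : ℝ) ^ (d + 1) ∧
      (∑ k ∈ Finset.Icc 1 n, ((n - k + d - 1).choose (d - 1) : ℝ) * k * Real.log k) -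
          (n : ℝ) * Real.log n ≥
        (n : ℝ) ^ (d + 1) * Real.log n / (d + 1).factorial - C * (n : ℝ) ^ (d + 1) := by
  obtain ⟨e, rfl⟩ : ∃ e, d = e + 1 := ⟨d - 1, by omega⟩
  refine ⟨((e + 1 : ℕ) : ℝ) ^ (e + 1) + 1, by positivity, ?_⟩
  intro n hn m hm
  have hrw : ∀ a : ℕ, a + (e + 1) - 1 = a + e := fun a => by omega
  simp only [hrw, Nat.add_sub_cancel]
  have hn1 : (1 : ℝ) ≤ (n : ℝ) := by exact_mod_cast (by omega : 1 ≤ n)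
  have hn0 : (0 : ℝ) < (n : ℝ) := by linarith
  have hlog0 : 0 ≤ Real.log n := Real.log_nonneg hn1
  have hlogn : Real.log n ≤ (n : ℝ) := by
    have := Real.log_le_sub_one_of_pos hn0; linarith
  -- termwise lower bound using log (n/k) ≤ n/k - 1
  have step1 : ∀ k ∈ Finset.Icc 1 n,
      ((n - k + e).choose e : ℝ) * k * Real.log n - ((n - k + e).choose e : ℝ) * n
        ≤ ((n - k + e).choose e : ℝ) * k * Real.log k := by
    intro k hk
    rw [Finset.mem_Icc] at hk
    have hk0 : (0 : ℝ) < (k : ℝ) := by exact_mod_cast (by omega : 0 < k)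
    have hkn : (k : ℝ) ≤ (n : ℝ) := by exact_mod_cast hk.2
    have hc0 : (0 : ℝ) ≤ ((n - k + e).choose e : ℝ) := Nat.cast_nonneg _
    have h3 : (k : ℝ) * (Real.log n - Real.log k) ≤ (n : ℝ) := by
      rw [show Real.log n - Real.log k = Real.log ((n : ℝ) / k) from
        (Real.log_div (ne_of_gt hn0) (ne_of_gt hk0)).symm]
      have h2 : Real.log ((n : ℝ) / k) ≤ (n : ℝ) / k - 1 :=
        Real.log_le_sub_one_of_pos (by positivity)
      calc (k : ℝ) * Real.log ((n : ℝ) / k) ≤ k * ((n : ℝ) / k - 1) :=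
            mul_le_mul_of_nonneg_left h2 (le_of_lt hk0)
        _ = (n : ℝ) - k := by field_simp
        _ ≤ (n : ℝ) := by linarith
    nlinarith [mul_le_mul_of_nonneg_left h3 hc0]
  have hsum1 : (∑ k ∈ Finset.Icc 1 n, (((n - k + e).choose e : ℝ) * k * Real.log n
        - ((n - k + e).choose e : ℝ) * n))
      ≤ ∑ k ∈ Finset.Icc 1 n, ((n - k + e).choose e : ℝ) * k * Real.log k :=
    Finset.sum_le_sum step1
  have hB : (∑ k ∈ Finset.Icc 1 n, ((n - k + e).choose e : ℝ) * k)
      = ((n + e + 1).choose (e + 2) : ℝ) := by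
    exact_mod_cast congrArg (fun x : ℕ => (x : ℝ)) (sumB e n)
  have hC : (∑ k ∈ Finset.Icc 1 n, ((n - k + e).choose e : ℝ))
      = ((n + e).choose (e + 1) : ℝ) := by
    exact_mod_cast congrArg (fun x : ℕ => (x : ℝ)) (sumC e n)
  have hmain : ((n + e + 1).choose (e + 2) : ℝ) * Real.log n
        - ((n + e).choose (e + 1) : ℝ) * n
      ≤ ∑ k ∈ Finset.Icc 1 n, ((n - k + e).choose e : ℝ) * k * Real.log k := by
    calc ((n + e + 1).choose (e + 2) : ℝ) * Real.log n - ((n + e).choose (e + 1) : ℝ) * n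
        = ∑ k ∈ Finset.Icc 1 n, (((n - k + e).choose e : ℝ) * k * Real.log n
            - ((n - k + e).choose e : ℝ) * n) := by
          rw [Finset.sum_sub_distrib, ← Finset.sum_mul, ← Finset.sum_mul, hB, hC]
      _ ≤ _ := hsum1
  have hBlow : (n : ℝ) ^ (e + 2) / ((e + 2).factorial : ℝ)
      ≤ ((n + e + 1).choose (e + 2) : ℝ) := by
    have h := Nat.pow_le_choose (e + 2) (n + e + 1) (α := ℝ)
    rw [show n + e + 1 + 1 - (e + 2) = n by omega] at h
    exact_mod_cast h
  have hCup : ((n + e).choose (e + 1) : ℝ) ≤ ((e + 1 : ℕ) : ℝ) ^ (e + 1) * (n : ℝ) ^ (e + 1) := by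
    have h0 : n + e ≤ (e + 1) * n := by
      calc n + e ≤ n + e * n := by
            have : e ≤ e * n := Nat.le_mul_of_pos_right e (by omega)
            omega
        _ = (e + 1) * n := by ring
    have h1 : (n + e).choose (e + 1) ≤ (e + 1) ^ (e + 1) * n ^ (e + 1) := by
      rw [← Nat.mul_pow]
      exact (Nat.choose_le_pow _ _).trans (Nat.pow_le_pow_left h0 _)
    exact_mod_cast h1
  have key : (∑ k ∈ Finset.Icc 1 n, ((n - k + e).choose e : ℝ) * k * Real.log k)
      - (n : ℝ) * Real.log n
      ≥ (n : ℝ) ^ (e + 1 + 1) * Real.log n / ((e + 1 + 1).factorial : ℝ)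
        - (((e + 1 : ℕ) : ℝ) ^ (e + 1) + 1) * (n : ℝ) ^ (e + 1 + 1) := by
    have h5 : (n : ℝ) ^ (e + 2) * Real.log n / ((e + 2).factorial : ℝ)
        ≤ ((n + e + 1).choose (e + 2) : ℝ) * Real.log n := by
      calc (n : ℝ) ^ (e + 2) * Real.log n / ((e + 2).factorial : ℝ)
          = ((n : ℝ) ^ (e + 2) / ((e + 2).factorial : ℝ)) * Real.log n := by ring
        _ ≤ _ := mul_le_mul_of_nonneg_right hBlow hlog0
    have h6 : ((n + e).choose (e + 1) : ℝ) * n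
        ≤ ((e + 1 : ℕ) : ℝ) ^ (e + 1) * (n : ℝ) ^ (e + 2) := by
      calc ((n + e).choose (e + 1) : ℝ) * n
          ≤ (((e + 1 : ℕ) : ℝ) ^ (e + 1) * (n : ℝ) ^ (e + 1)) * n :=
            mul_le_mul_of_nonneg_right hCup (le_of_lt hn0)
        _ = ((e + 1 : ℕ) : ℝ) ^ (e + 1) * (n : ℝ) ^ (e + 2) := by ring
    have h7 : (n : ℝ) * Real.log n ≤ (n : ℝ) ^ (e + 2) := by
      calc (n : ℝ) * Real.log n ≤ (n : ℝ) * n := mul_le_mul_of_nonneg_left hlogn (le_of_lt hn0)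
        _ = (n : ℝ) ^ 2 := by ring
        _ ≤ (n : ℝ) ^ (e + 2) := pow_le_pow_right₀ hn1 (by omega)
    rw [ge_iff_le, show e + 1 + 1 = e + 2 by omega]
    linarith [hmain, h5, h6, h7]
  refine ⟨?_, key⟩
  -- first statement
  have hprod : Real.log (∏ k ∈ Finset.Icc 1 n,
        ∏ _j ∈ (Fintype.piFinset fun _ : Fin (e + 1) => Finset.range (n + 1)).filter
            (fun j => (∑ i, j i) = n - k ∧ j ≠ m), (k : ℝ) ^ k)
      = ∑ k ∈ Finset.Icc 1 n,
          ((((Fintype.piFinset fun _ : Fin (e + 1) => Finset.range (n + 1)).filter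
            (fun j => (∑ i, j i) = n - k ∧ j ≠ m)).card : ℝ) * ((k : ℝ) * Real.log k)) := by
    rw [Real.log_prod]
    · refine Finset.sum_congr rfl fun k hk => ?_
      rw [Finset.prod_const, Real.log_pow, Real.log_pow]
    · intro k hk
      rw [Finset.mem_Icc] at hk
      have hk0 : (0 : ℝ) < (k : ℝ) := by exact_mod_cast (by omega : 0 < k)
      exact ne_of_gt (Finset.prod_pos fun _ _ => pow_pos hk0 k)
  have hcard : ∀ k ∈ Finset.Icc 1 n,
      ((n - k + e).choose e : ℝ) * ((k : ℝ) * Real.log k)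
          - (if k = n - ∑ i, m i then (n : ℝ) * Real.log n else 0)
        ≤ ((((Fintype.piFinset fun _ : Fin (e + 1) => Finset.range (n + 1)).filter
            (fun j => (∑ i, j i) = n - k ∧ j ≠ m)).card : ℝ) * ((k : ℝ) * Real.log k)) := by
    intro k hk
    rw [Finset.mem_Icc] at hk
    have hk1 : (1 : ℝ) ≤ (k : ℝ) := by exact_mod_cast hk.1
    have hkl0 : 0 ≤ (k : ℝ) * Real.log k := mul_nonneg (by positivity) (Real.log_nonneg hk1)
    have hGcard : ((Fintype.piFinset fun _ : Fin (e + 1) => Finset.range (n + 1)).filter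
        (fun j => (∑ i, j i) = n - k)).card = (n - k + e).choose e := by
      rw [filter_eq_piAntidiag (e + 1) n (n - k) (by omega), card_G']
    have hFeq : (Fintype.piFinset fun _ : Fin (e + 1) => Finset.range (n + 1)).filter
          (fun j => (∑ i, j i) = n - k ∧ j ≠ m)
        = ((Fintype.piFinset fun _ : Fin (e + 1) => Finset.range (n + 1)).filter
          (fun j => (∑ i, j i) = n - k)).erase m := by
      ext j
      simp only [Finset.mem_filter, Finset.mem_erase]
      tauto
    rw [hFeq]
    by_cases hmem : m ∈ (Fintype.piFinset fun _ : Fin (e + 1) => Finset.range (n + 1)).filter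
        (fun j => (∑ i, j i) = n - k)
    · have hsm : (∑ i, m i) = n - k := (Finset.mem_filter.mp hmem).2
      have hkt : k = n - ∑ i, m i := by clear hGcard hFeq; omega
      rw [if_pos hkt, Finset.card_erase_of_mem hmem, hGcard]
      have hcpos : 1 ≤ (n - k + e).choose e := Nat.choose_pos (by clear hGcard hFeq; omega : e ≤ n - k + e)
      rw [Nat.cast_sub hcpos, Nat.cast_one]
      have hkln : (k : ℝ) * Real.log k ≤ (n : ℝ) * Real.log n := by
        have hkn' : (k : ℝ) ≤ (n : ℝ) := by exact_mod_cast hk.2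
        have hll : Real.log k ≤ Real.log n := Real.log_le_log (by positivity) hkn'
        exact mul_le_mul hkn' hll (Real.log_nonneg hk1) (by positivity)
      nlinarith [hkln]
    · rw [Finset.erase_eq_of_notMem hmem, hGcard]
      have hpos : (0 : ℝ) ≤ if k = n - ∑ i, m i then (n : ℝ) * Real.log n else 0 := by
        split
        · exact mul_nonneg (by positivity) hlog0
        · exact le_refl 0
      linarith
  have hsum2 := Finset.sum_le_sum hcard
  rw [Finset.sum_sub_distrib] at hsum2
  have hite : (∑ k ∈ Finset.Icc 1 n, if k = n - ∑ i, m i then (n : ℝ) * Real.log n else 0)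
      ≤ (n : ℝ) * Real.log n := by
    rw [Finset.sum_ite_eq' (Finset.Icc 1 n) (n - ∑ i, m i) (fun _ => (n : ℝ) * Real.log n)]
    split
    · exact le_refl _
    · exact mul_nonneg (le_of_lt hn0) hlog0
  have hassoc : (∑ k ∈ Finset.Icc 1 n, ((n - k + e).choose e : ℝ) * ((k : ℝ) * Real.log k))
      = ∑ k ∈ Finset.Icc 1 n, ((n - k + e).choose e : ℝ) * k * Real.log k :=
    Finset.sum_congr rfl fun k _ => by ring
  rw [ge_iff_le] at key ⊢
  rw [hprod]
  linarith [hsum2, hite, key, hassoc]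
end
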